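/- Let n ≥ 1 and m ≥ 1. The number of subgroups of index m in ℤ^n is finite and equals ∑ d_1^0 · d_2^1 · d_3^2 ⋯ d_n^{n−1}, where the sum runs over all tuples (d_1,…,d_n) of positive integers with d_1 · d_2 ⋯ d_n = m. -/

import Mathlib

/-!
A subgroup `H` of finite index of `ℤ × A` is determined by its intersection `K` with `A`, the
image `dℤ` of its projection to `ℤ`, and the coset of `K` formed by the `v` with `(d, v) ∈ H`;
its index is `d * [A : K]`, and every such triple occurs. So the number of subgroups of index `m`
of `ℤ^(n+1)` is `∑_{dk = m} a_n(k) * k`, where `a_n(k)` counts those of index `k` in `ℤ^n`. The sum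
over factorizations `m = d_1 ⋯ d_(n+1)` obeys the same recursion: splitting off `d_1 = d` raises
the exponent of every other factor by one, which contributes the factor `d_2 ⋯ d_(n+1) = k`.
-/

open Finset AddSubgroup

theorem Int.eq_zmultiples_index (S : AddSubgroup ℤ) : S = zmultiples (S.index : ℤ) := by
  obtain ⟨a, rfl⟩ := Int.subgroup_cyclic S
  rw [← zmultiples_eq_closure, Int.index_zmultiples, Int.zmultiples_natAbs]

namespace AddSubgroup

theorem index_eq_index_map_mul_relIndex_ker {G G' : Type*} [AddCommGroup G] [AddGroup G']
    (H : AddSubgroup G) {f : G →+ G'} (hf : Function.Surjective f) :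
    H.index = (H.map f).index * H.relIndex f.ker := by
  rw [← index_comap_of_surjective _ hf, comap_map_eq, ← relIndex_sup_left, mul_comm,
    relIndex_mul_index le_sup_left]

theorem index_eq_index_map_fst_mul_index_comap_inr {G A : Type*} [AddCommGroup G]
    [AddCommGroup A] (H : AddSubgroup (G × A)) :
    H.index = (H.map (AddMonoidHom.fst G A)).index * (H.comap (AddMonoidHom.inr G A)).index := by
  have hrange : (AddMonoidHom.inr G A).range = (AddMonoidHom.fst G A).ker := by
    ext ⟨a, b⟩
    simp [mem_prod, eq_comm]
  rw [index_eq_index_map_mul_relIndex_ker H (f := AddMonoidHom.fst G A) Prod.fst_surjective,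
    index_comap, hrange]

variable {A : Type*} [AddCommGroup A]

/-- The subgroup generated by `0 × K` and `(d, v)` for any `v ∈ q`. -/
def ofIntCoset (K : AddSubgroup A) (d : ℕ) (q : A ⧸ K) : AddSubgroup (ℤ × A) :=
  (zmultiples ((d : ℤ), q)).comap ((AddMonoidHom.id ℤ).prodMap (QuotientAddGroup.mk' K))

variable {K : AddSubgroup A} {d : ℕ} {q : A ⧸ K}

theorem mem_ofIntCoset {x : ℤ × A} :
    x ∈ K.ofIntCoset d q ↔ ∃ j : ℤ, j * d = x.1 ∧ j • q = x.2 := by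
  simp [ofIntCoset, mem_zmultiples_iff, Prod.ext_iff]

theorem comap_inr_ofIntCoset (hd : d ≠ 0) :
    (K.ofIntCoset d q).comap (AddMonoidHom.inr ℤ A) = K := by
  ext a
  simp [mem_ofIntCoset, hd, eq_comm (a := (0 : A ⧸ K))]

theorem map_fst_ofIntCoset :
    (K.ofIntCoset d q).map (AddMonoidHom.fst ℤ A) = zmultiples (d : ℤ) := by
  ext a
  obtain ⟨v, rfl⟩ := QuotientAddGroup.mk_surjective q
  simp only [mem_map, mem_ofIntCoset, mem_zmultiples_iff, AddMonoidHom.coe_fst, smul_eq_mul]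
  constructor
  · rintro ⟨x, ⟨j, hj, -⟩, rfl⟩
    exact ⟨j, hj⟩
  · rintro ⟨j, rfl⟩
    exact ⟨(j * d, j • v), ⟨j, rfl, rfl⟩, rfl⟩

theorem index_ofIntCoset (hd : d ≠ 0) : (K.ofIntCoset d q).index = d * K.index := by
  rw [index_eq_index_map_fst_mul_index_comap_inr, map_fst_ofIntCoset, comap_inr_ofIntCoset hd,
    Int.index_zmultiples, Int.natAbs_natCast]

theorem ofIntCoset_injective (K : AddSubgroup A) (hd : d ≠ 0) :
    Function.Injective (K.ofIntCoset d) := by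
  intro q q' h
  obtain ⟨v, rfl⟩ := QuotientAddGroup.mk_surjective q
  have hv : ((d : ℤ), v) ∈ K.ofIntCoset d q' := h ▸ mem_ofIntCoset.2 ⟨1, one_mul _, one_smul _ _⟩
  obtain ⟨j, hj, hq⟩ := mem_ofIntCoset.1 hv
  obtain rfl : j = 1 := (mul_eq_right₀ (by exact_mod_cast hd)).1 hj
  simpa using hq.symm

theorem exists_eq_ofIntCoset (H : AddSubgroup (ℤ × A)) (hH : H.index ≠ 0) :
    ∃ q, H =
      (H.comap (AddMonoidHom.inr ℤ A)).ofIntCoset (H.map (AddMonoidHom.fst ℤ A)).index q := by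
  set K := H.comap (AddMonoidHom.inr ℤ A)
  set d := (H.map (AddMonoidHom.fst ℤ A)).index
  have hHK : H.index = d * K.index := index_eq_index_map_fst_mul_index_comap_inr H
  have hd : d ≠ 0 := left_ne_zero_of_mul (hHK ▸ hH)
  obtain ⟨x, hx, hxd⟩ : (d : ℤ) ∈ H.map (AddMonoidHom.fst ℤ A) := by
    rw [Int.eq_zmultiples_index (H.map _)]
    exact mem_zmultiples _
  refine ⟨x.2, ?_⟩
  have hle : K.ofIntCoset d x.2 ≤ H := by
    intro y hy
    obtain ⟨j, hj1, hj2⟩ := mem_ofIntCoset.1 hy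
    have hK : y.2 - j • x.2 ∈ K := by
      rw [← QuotientAddGroup.eq_iff_sub_mem]
      simpa using hj2.symm
    have : y = (0, y.2 - j • x.2) + j • x := by
      ext
      · simp [← hj1, ← hxd]
      · simp
    rw [this]
    exact H.add_mem hK (H.zsmul_mem hx j)
  have : (K.ofIntCoset d x.2).FiniteIndex := ⟨by rw [index_ofIntCoset hd, ← hHK]; exact hH⟩
  refine (hle.eq_or_lt.resolve_right fun hlt => ?_).symm
  exact (index_strictAnti hlt).ne (by rw [index_ofIntCoset hd, hHK])

variable (A) in
def ofIntCosetOfIndex (m : ℕ)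
    (x : Σ dk : m.divisorsAntidiagonal, Σ K : {K : AddSubgroup A // K.index = dk.1.2}, A ⧸ K.1) :
    {H : AddSubgroup (ℤ × A) // H.index = m} :=
  ⟨x.2.1.1.ofIntCoset x.1.1.1 x.2.2, by
    obtain ⟨⟨⟨d, k⟩, hdk⟩, ⟨K, hK⟩, q⟩ := x
    obtain ⟨rfl, hm⟩ := Nat.mem_divisorsAntidiagonal.1 hdk
    rw [index_ofIntCoset (left_ne_zero_of_mul hm), hK]⟩

theorem bijective_ofIntCosetOfIndex {m : ℕ} (hm : m ≠ 0) :
    Function.Bijective (ofIntCosetOfIndex A m) := by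
  constructor
  · rintro ⟨⟨⟨d, k⟩, hdk⟩, ⟨K, hK⟩, q⟩ ⟨⟨⟨d', k'⟩, hdk'⟩, ⟨K', hK'⟩, q'⟩ h
    have h : K.ofIntCoset d q = K'.ofIntCoset d' q' := congrArg Subtype.val h
    have hd : d ≠ 0 := Nat.left_ne_zero_of_mem_divisorsAntidiagonal hdk
    have hd' : d' ≠ 0 := Nat.left_ne_zero_of_mem_divisorsAntidiagonal hdk'
    obtain rfl : K = K' :=
      (comap_inr_ofIntCoset hd).symm.trans ((congrArg _ h).trans (comap_inr_ofIntCoset hd'))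
    obtain rfl : d = d' := by
      simpa [map_fst_ofIntCoset] using congrArg (fun H => (H.map (AddMonoidHom.fst ℤ A)).index) h
    obtain rfl : k = k' := hK.symm.trans hK'
    obtain rfl : q = q' := ofIntCoset_injective K hd h
    rfl
  · rintro ⟨H, rfl⟩
    obtain ⟨q, hq⟩ := exists_eq_ofIntCoset H hm
    have hdk := Nat.mem_divisorsAntidiagonal (x := (_, _)) |>.2
      ⟨(index_eq_index_map_fst_mul_index_comap_inr H).symm, hm⟩
    exact ⟨⟨⟨_, hdk⟩, ⟨_, rfl⟩, q⟩, Subtype.ext hq.symm⟩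

theorem card_addSubgroups_int_prod_of_index {m : ℕ} (hm : m ≠ 0)
    (hA : ∀ k ≠ 0, Finite {K : AddSubgroup A // K.index = k}) :
    Finite {H : AddSubgroup (ℤ × A) // H.index = m} ∧
      Nat.card {H : AddSubgroup (ℤ × A) // H.index = m} =
        ∑ dk ∈ m.divisorsAntidiagonal, Nat.card {K : AddSubgroup A // K.index = dk.2} * dk.2 := by
  have hbij := bijective_ofIntCosetOfIndex (A := A) hm
  have hk (dk : m.divisorsAntidiagonal) : dk.1.2 ≠ 0 :=
    Nat.right_ne_zero_of_mem_divisorsAntidiagonal dk.2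
  have (dk : m.divisorsAntidiagonal) := hA _ (hk dk)
  have (dk : m.divisorsAntidiagonal) (K : {K : AddSubgroup A // K.index = dk.1.2}) :
      Finite (A ⧸ K.1) :=
    Nat.finite_of_card_ne_zero (by rw [← index_eq_card, K.2]; exact hk dk)
  refine ⟨Finite.of_surjective _ hbij.2, ?_⟩
  rw [← Nat.card_eq_of_bijective _ hbij, Nat.card_sigma,
    ← Finset.sum_coe_sort m.divisorsAntidiagonal]
  refine Fintype.sum_congr _ _ fun dk => ?_
  have := Fintype.ofFinite {K : AddSubgroup A // K.index = dk.1.2}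
  rw [Nat.card_sigma, sum_congr rfl fun K _ => (index_eq_card K.1).symm.trans K.2, sum_const,
    card_univ, smul_eq_mul, Nat.card_eq_fintype_card]

end AddSubgroup

namespace Nat

theorem sum_finMulAntidiag_succ {M : Type*} [AddCommMonoid M] (n m : ℕ)
    (g : (Fin (n + 1) → ℕ) → M) :
    ∑ f ∈ finMulAntidiag (n + 1) m, g f =
      ∑ dk ∈ m.divisorsAntidiagonal, ∑ e ∈ finMulAntidiag n dk.2, g (Fin.cons dk.1 e) := by
  rw [sum_sigma']
  refine (sum_nbij' (fun x => Fin.cons x.1.1 x.2)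
    (fun f => ⟨(f 0, ∏ i : Fin n, f i.succ), Fin.tail f⟩) ?_ ?_ ?_ ?_ ?_).symm
  · rintro ⟨⟨d, k⟩, e⟩ h
    simp_all [Fin.prod_univ_succ]
  · intro f hf
    rw [mem_finMulAntidiag, Fin.prod_univ_succ] at hf
    simp [Fin.tail, hf, right_ne_zero_of_mul (hf.1 ▸ hf.2)]
  · rintro ⟨⟨d, k⟩, e⟩ h
    simp_all
  · intro f _
    exact Fin.cons_self_tail f
  · intros
    rfl

theorem sum_prod_pow_finMulAntidiag_succ (n m : ℕ) :
    ∑ f ∈ finMulAntidiag (n + 1) m, ∏ i : Fin (n + 1), f i ^ (i : ℕ) =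
      ∑ dk ∈ m.divisorsAntidiagonal,
        (∑ e ∈ finMulAntidiag n dk.2, ∏ i : Fin n, e i ^ (i : ℕ)) * dk.2 := by
  rw [sum_finMulAntidiag_succ]
  refine sum_congr rfl fun dk _ => ?_
  rw [sum_mul]
  refine sum_congr rfl fun e he => ?_
  rw [Fin.prod_univ_succ, ← prod_eq_of_mem_finMulAntidiag he, ← prod_mul_distrib]
  simp [pow_succ]

end Nat

def AddEquiv.subgroupsOfIndexCongr {G G' : Type*} [AddGroup G] [AddGroup G'] (e : G ≃+ G')
    (m : ℕ) : {H : AddSubgroup G // H.index = m} ≃ {H : AddSubgroup G' // H.index = m} :=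
  e.mapAddSubgroup.toEquiv.subtypeEquiv fun H => by simp [index_map_equiv]

theorem card_addSubgroups_pi_int_of_index (n : ℕ) {m : ℕ} (hm : m ≠ 0) :
    Finite {H : AddSubgroup (Fin n → ℤ) // H.index = m} ∧
      Nat.card {H : AddSubgroup (Fin n → ℤ) // H.index = m} =
        ∑ f ∈ Nat.finMulAntidiag n m, ∏ i : Fin n, f i ^ (i : ℕ) := by
  induction n generalizing m with
  | zero =>
    have hidx (H : AddSubgroup (Fin 0 → ℤ)) : H.index = 1 :=
      index_eq_one.mpr (Subsingleton.elim _ _)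
    refine ⟨Finite.of_subsingleton, ?_⟩
    rcases eq_or_ne m 1 with rfl | hm1
    · simp [Nat.finMulAntidiag_one, hidx]
    · simp [Nat.finMulAntidiag_zero_left hm1, hidx, hm1.symm]
  | succ n ih =>
    let e := (Fin.consLinearEquiv ℤ fun _ : Fin (n + 1) => ℤ).toAddEquiv.subgroupsOfIndexCongr m
    obtain ⟨hfin, hcard⟩ := card_addSubgroups_int_prod_of_index hm fun k hk => (ih hk).1
    refine ⟨.of_equiv _ e, ?_⟩
    rw [← Nat.card_congr e, hcard, Nat.sum_prod_pow_finMulAntidiag_succ]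
    refine sum_congr rfl fun dk hdk => ?_
    rw [(ih (Nat.right_ne_zero_of_mem_divisorsAntidiagonal hdk)).2]

theorem card_addSubgroups_of_index_general
    (n : ℕ) (m : ℕ) (hm : 1 ≤ m) :
    {H : AddSubgroup (Fin n → ℤ) | H.index = m}.Finite ∧
      Nat.card {H : AddSubgroup (Fin n → ℤ) // H.index = m} =
        ∑ d ∈ (Fintype.piFinset fun _ : Fin n => m.divisors).filter
            (fun d => ∏ i, d i = m),
          ∏ i : Fin n, d i ^ (i : ℕ) := by
  have hm0 : m ≠ 0 := Nat.one_le_iff_ne_zero.mp hm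
  obtain ⟨hfin, hcard⟩ := card_addSubgroups_pi_int_of_index n hm0
  rw [← Nat.finMulAntidiag_eq_piFinset_divisors_filter dvd_rfl hm0]
  exact ⟨Set.finite_coe_iff.mp hfin, hcard⟩

/-- The number of subgroups of index `m` in `ℤ^n` is finite and equals
`∑ d_1^0 d_2^1 ⋯ d_n^{n-1}`, the sum running over all tuples `(d_1,…,d_n)` of positive
integers with `d_1 d_2 ⋯ d_n = m` (the tuples are indexed by `Fin n`, so `i ∈ Fin n`
corresponds to the factor `d_{i+1}^{i}`). -/
theorem card_addSubgroups_of_index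
    (n : ℕ) (hn : 1 ≤ n) (m : ℕ) (hm : 1 ≤ m) :
    {H : AddSubgroup (Fin n → ℤ) | H.index = m}.Finite ∧
      Nat.card {H : AddSubgroup (Fin n → ℤ) // H.index = m} =
        ∑ d ∈ (Fintype.piFinset fun _ : Fin n => m.divisors).filter
            (fun d => ∏ i, d i = m),
          ∏ i : Fin n, d i ^ (i : ℕ) :=
  card_addSubgroups_of_index_general n m hm
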